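/- For orthogonal pure imaginary octonions p and q, the set of linear maps spanned by all \(L_p\) (p pure imaginary) together with all commutators \([L_p, L_q]\) is closed under the commutator bracket; explicitly, for mutually orthogonal pure imaginary unit octonions p, q, r, s one has \([L_p, L_q] = 2 L_p \circ L_q\), \([L_p, [L_p,L_q]] = -4 L_q\), \([[L_r,L_p],[L_p,L_q]] = -4[L_r,L_q]\), \([L_r,[L_p,L_q]] = 0\), and \([[L_p,L_q],[L_r,L_s]] = 0\). -/

import Mathlib

noncomputable section
open Quaternion

/-- The octonions, as the Cayley–Dickson double of the real quaternions. -/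
@[ext] structure Oct : Type where
  x : ℍ[ℝ]
  y : ℍ[ℝ]

namespace Oct

instance : Zero Oct := ⟨⟨0, 0⟩⟩
instance : One Oct := ⟨⟨1, 0⟩⟩
instance : Add Oct := ⟨fun a b => ⟨a.x + b.x, a.y + b.y⟩⟩
instance : Neg Oct := ⟨fun a => ⟨-a.x, -a.y⟩⟩
instance : Sub Oct := ⟨fun a b => ⟨a.x - b.x, a.y - b.y⟩⟩
instance : SMul ℝ Oct := ⟨fun r a => ⟨r • a.x, r • a.y⟩⟩
/-- Cayley–Dickson multiplication. -/
instance : Mul Oct := ⟨fun a b => ⟨a.x * b.x - star b.y * a.y, b.y * a.x + a.y * star b.x⟩⟩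

@[simp] lemma zero_x : (0 : Oct).x = 0 := rfl
@[simp] lemma zero_y : (0 : Oct).y = 0 := rfl
@[simp] lemma one_x : (1 : Oct).x = 1 := rfl
@[simp] lemma one_y : (1 : Oct).y = 0 := rfl
@[simp] lemma add_x (a b : Oct) : (a + b).x = a.x + b.x := rfl
@[simp] lemma add_y (a b : Oct) : (a + b).y = a.y + b.y := rfl
@[simp] lemma neg_x (a : Oct) : (-a).x = -a.x := rfl
@[simp] lemma neg_y (a : Oct) : (-a).y = -a.y := rfl
@[simp] lemma sub_x (a b : Oct) : (a - b).x = a.x - b.x := rfl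
@[simp] lemma sub_y (a b : Oct) : (a - b).y = a.y - b.y := rfl
@[simp] lemma smul_x (r : ℝ) (a : Oct) : (r • a).x = r • a.x := rfl
@[simp] lemma smul_y (r : ℝ) (a : Oct) : (r • a).y = r • a.y := rfl
@[simp] lemma mul_x (a b : Oct) : (a * b).x = a.x * b.x - star b.y * a.y := rfl
@[simp] lemma mul_y (a b : Oct) : (a * b).y = b.y * a.x + a.y * star b.x := rfl

instance : AddCommGroup Oct where
  add_assoc a b c := by ext <;> simp [add_assoc]
  zero_add a := by ext <;> simp
  add_zero a := by ext <;> simp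
  add_comm a b := by ext <;> simp [add_comm]
  neg_add_cancel a := by ext <;> simp
  sub_eq_add_neg a b := by ext <;> simp [sub_eq_add_neg]
  nsmul := nsmulRec
  zsmul := zsmulRec

instance : Module ℝ Oct where
  one_smul a := by ext <;> simp
  mul_smul r s a := by ext <;> simp [mul_smul]
  smul_zero r := by ext <;> simp
  smul_add r a b := by ext <;> simp
  add_smul r s a := by ext <;> simp [add_smul]
  zero_smul a := by ext <;> simp

/-- Octonion conjugation. -/
def conj (a : Oct) : Oct := ⟨star a.x, -a.y⟩

/-- Real part. -/
def re (a : Oct) : ℝ := a.x.re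

/-- The inner product `⟨a,b⟩ = Re (a * conj b)`. -/
def inner (a b : Oct) : ℝ := re (a * conj b)

/-- Left multiplication. -/
def L (a : Oct) : Oct → Oct := fun v => a * v

/-- Right multiplication. -/
def R (a : Oct) : Oct → Oct := fun v => v * a

lemma mul_add' (a u v : Oct) : a * (u + v) = a * u + a * v := by
  ext <;> simp [mul_add, add_mul] <;> abel

lemma add_mul' (a b u : Oct) : (a + b) * u = a * u + b * u := by
  ext <;> simp [mul_add, add_mul] <;> abel

lemma mul_smul' (r : ℝ) (a u : Oct) : a * (r • u) = r • (a * u) := by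
  ext <;> simp [mul_smul_comm, smul_mul_assoc, smul_sub, smul_add]

lemma smul_mul' (r : ℝ) (a u : Oct) : (r • a) * u = r • (a * u) := by
  ext <;> simp [mul_smul_comm, smul_mul_assoc, smul_sub, smul_add]

/-- Left multiplication as a real-linear map. -/
def Llin (a : Oct) : Oct →ₗ[ℝ] Oct where
  toFun v := a * v
  map_add' u v := mul_add' a u v
  map_smul' r u := mul_smul' r a u

/-- The imaginary quaternion units. -/
def qi : ℍ[ℝ] := ⟨0, 1, 0, 0⟩
def qj : ℍ[ℝ] := ⟨0, 0, 1, 0⟩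
def qk : ℍ[ℝ] := ⟨0, 0, 0, 1⟩

/-- The standard imaginary basis units of the octonions. -/
def i : Oct := ⟨qi, 0⟩
def j : Oct := ⟨qj, 0⟩
def k : Oct := ⟨qk, 0⟩
def l : Oct := ⟨0, 1⟩
def il : Oct := ⟨0, qi⟩
def jl : Oct := ⟨0, qj⟩
def kl : Oct := ⟨0, qk⟩

/-- The standard basis of the octonions. -/
def basisSet : Set Oct := {1, i, j, k, l, il, jl, kl}

/-- The imaginary standard basis units. -/
def imSet : Set Oct := {i, j, k, l, il, jl, kl}

end Oct

/-- Commutator of endomorphisms of the octonions, as plain maps. -/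
def cOm (f g : Oct → Oct) : Oct → Oct := f ∘ g - g ∘ f

/-!
Left alternativity `a (a v) = (a a) v` polarizes to `L a ∘ L b + L b ∘ L a = L (a b + b a)`,
and for pure imaginary `a, b` one has `a b + b a = -2 ⟨a, b⟩`. Hence the left multiplications
by mutually orthogonal pure imaginary units anticommute, and `L p ∘ L p = -1` for a unit `p`.
All five identities are formal consequences of these Clifford relations in any associative
algebra.
-/

section Anticommuting

variable {R A : Type*} [CommRing R] [Ring A] [Algebra R A] {a b c d : A}

theorem commute_mul_of_anticomm (ha : c * a = -(a * c)) (hb : c * b = -(b * c)) :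
    Commute c (a * b) := by
  rw [Commute, SemiconjBy, ← mul_assoc, ha, neg_mul, mul_assoc, hb, mul_neg, neg_neg, mul_assoc]

theorem commute_lie_of_anticomm (ha : c * a = -(a * c)) (hb : c * b = -(b * c)) :
    Commute c ⁅a, b⁆ := by
  rw [Ring.lie_def]
  exact (commute_mul_of_anticomm ha hb).sub_right (commute_mul_of_anticomm hb ha)

variable (R) in
theorem lie_eq_two_smul_mul_of_anticomm (h : a * b = -(b * a)) :
    ⁅a, b⁆ = (2 : R) • (a * b) := by
  rw [Ring.lie_def, h]
  module

variable (R) in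
theorem lie_lie_eq_neg_four_smul_of_anticomm (ha : a * a = -1) (h : a * b = -(b * a)) :
    ⁅a, ⁅a, b⁆⁆ = (-4 : R) • b := by
  have haab : a * (a * b) = -b := by rw [← mul_assoc, ha, neg_one_mul]
  have haba : a * b * a = b := by rw [h, neg_mul, mul_assoc, ha, mul_neg_one, neg_neg]
  rw [lie_eq_two_smul_mul_of_anticomm R h, Ring.lie_def, mul_smul_comm, smul_mul_assoc, haab,
    haba]
  module

variable (R) in
theorem lie_lie_lie_eq_neg_four_smul_lie_of_anticomm (ha : a * a = -1)
    (hca : c * a = -(a * c)) (hab : a * b = -(b * a)) :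
    ⁅⁅c, a⁆, ⁅a, b⁆⁆ = (-4 : R) • ⁅c, b⁆ := by
  have hcaab : c * a * (a * b) = -(c * b) := by
    rw [mul_assoc, ← mul_assoc a, ha, neg_one_mul, mul_neg]
  have habca : a * b * (c * a) = -(b * c) := by
    have hac : a * c = -(c * a) := by rw [hca, neg_neg]
    rw [← mul_assoc, mul_assoc a, (commute_mul_of_anticomm hab hac).eq, mul_assoc, ha,
      mul_neg_one]
  rw [lie_eq_two_smul_mul_of_anticomm R hca, lie_eq_two_smul_mul_of_anticomm R hab,
    Ring.lie_def, Ring.lie_def c, smul_mul_smul_comm, smul_mul_smul_comm, hcaab, habca]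
  module

theorem lie_lie_eq_zero_of_anticomm (ha : c * a = -(a * c)) (hb : c * b = -(b * c)) :
    ⁅c, ⁅a, b⁆⁆ = 0 :=
  (commute_lie_of_anticomm ha hb).lie_eq

theorem lie_lie_lie_eq_zero_of_anticomm (hca : c * a = -(a * c)) (hcb : c * b = -(b * c))
    (hda : d * a = -(a * d)) (hdb : d * b = -(b * d)) : ⁅⁅a, b⁆, ⁅c, d⁆⁆ = 0 := by
  have hc := (commute_lie_of_anticomm hca hcb).symm
  have hd := (commute_lie_of_anticomm hda hdb).symm
  rw [Ring.lie_def c]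
  exact ((hc.mul_right hd).sub_right (hd.mul_right hc)).lie_eq

end Anticommuting

namespace Oct

theorem mul_mul_self_left (a v : Oct) : a * (a * v) = a * a * v := by
  ext <;> simp <;> ring

theorem mul_conj_add_mul_conj (a b : Oct) : a * conj b + b * conj a = (2 * inner a b) • 1 := by
  ext <;> simp [inner, re, conj] <;> ring

theorem inner_comm (a b : Oct) : inner a b = inner b a := by
  simp [inner, re, conj]
  ring

theorem mul_neg' (a v : Oct) : a * -v = -(a * v) := by
  ext <;> simp <;> abel

theorem mul_add_mul_of_conj_eq_neg {a b : Oct} (ha : conj a = -a) (hb : conj b = -b) :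
    a * b + b * a = -(2 * inner a b) • (1 : Oct) := by
  rw [neg_smul, ← mul_conj_add_mul_conj, ha, hb, mul_neg', mul_neg', neg_add, neg_neg, neg_neg]

theorem mul_self_eq_neg_one {a : Oct} (ha : conj a = -a) (hu : a * conj a = 1) : a * a = -1 := by
  rw [← hu, ha, mul_neg', neg_neg]

theorem L_eq_coe_Llin (a : Oct) : L a = ⇑(Llin a) := rfl

theorem Llin_add (a b : Oct) : Llin (a + b) = Llin a + Llin b :=
  LinearMap.ext (add_mul' a b)

theorem Llin_smul_one (r : ℝ) : Llin (r • 1) = r • 1 :=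
  LinearMap.ext fun v => by ext <;> simp [Llin]

theorem Llin_mul_self (a : Oct) : Llin a * Llin a = Llin (a * a) :=
  LinearMap.ext (mul_mul_self_left a)

theorem Llin_mul_add_mul (a b : Oct) :
    Llin a * Llin b + Llin b * Llin a = Llin (a * b + b * a) := by
  have h := Llin_mul_self (a + b)
  simp only [Llin_add, add_mul, mul_add, add_mul', mul_add', Llin_mul_self] at h
  rw [Llin_add]
  linear_combination (norm := abel) h

theorem Llin_mul_self_eq_neg_one {a : Oct} (ha : conj a = -a) (hu : a * conj a = 1) :
    Llin a * Llin a = -1 := by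
  rw [Llin_mul_self, mul_self_eq_neg_one ha hu, ← neg_one_smul ℝ (1 : Oct), Llin_smul_one,
    neg_one_smul]

theorem Llin_anticomm {a b : Oct} (ha : conj a = -a) (hb : conj b = -b) (hab : inner a b = 0) :
    Llin a * Llin b = -(Llin b * Llin a) := by
  refine eq_neg_of_add_eq_zero_left ?_
  rw [Llin_mul_add_mul, mul_add_mul_of_conj_eq_neg ha hb, Llin_smul_one, hab, mul_zero, neg_zero,
    zero_smul]

end Oct

theorem cOm_coe (F G : Module.End ℝ Oct) : cOm F G = ⇑⁅F, G⁆ := by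
  rw [Ring.lie_def]; rfl

open Oct in
theorem so8_closure_general (p q r s : Oct)
    (hp : conj p = -p) (hq : conj q = -q) (hr : conj r = -r) (hs : conj s = -s)
    (hpu : p * conj p = 1)
    (hpq : inner p q = 0) (hpr : inner p r = 0) (hps : inner p s = 0)
    (hqr : inner q r = 0) (hqs : inner q s = 0) :
    cOm (L p) (L q) = (2 : ℝ) • (L p ∘ L q) ∧
    cOm (L p) (cOm (L p) (L q)) = (-4 : ℝ) • L q ∧
    cOm (cOm (L r) (L p)) (cOm (L p) (L q)) = (-4 : ℝ) • cOm (L r) (L q) ∧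
    cOm (L r) (cOm (L p) (L q)) = 0 ∧
    cOm (cOm (L p) (L q)) (cOm (L r) (L s)) = 0 := by
  have hP := Llin_mul_self_eq_neg_one hp hpu
  have hPQ := Llin_anticomm hp hq hpq
  have hRP := Llin_anticomm hr hp ((inner_comm r p).trans hpr)
  have hSP := Llin_anticomm hs hp ((inner_comm s p).trans hps)
  have hRQ := Llin_anticomm hr hq ((inner_comm r q).trans hqr)
  have hSQ := Llin_anticomm hs hq ((inner_comm s q).trans hqs)
  simp only [L_eq_coe_Llin, cOm_coe, ← Module.End.coe_mul, ← LinearMap.coe_smul,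
    LinearMap.coe_zero_iff, DFunLike.coe_fn_eq]
  exact ⟨lie_eq_two_smul_mul_of_anticomm ℝ hPQ,
    lie_lie_eq_neg_four_smul_of_anticomm ℝ hP hPQ,
    lie_lie_lie_eq_neg_four_smul_lie_of_anticomm ℝ hP hRP hPQ,
    lie_lie_eq_zero_of_anticomm hRP hRQ,
    lie_lie_lie_eq_zero_of_anticomm hRP hRQ hSP hSQ⟩

open Oct in
/-- The span of left multiplications and their commutators is closed under the
bracket: for mutually orthogonal pure imaginary unit octonions `p, q, r, s`,
`[L p, L q] = 2 L p ∘ L q`, `[L p,[L p, L q]] = -4 L q`,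
`[[L r, L p],[L p, L q]] = -4 [L r, L q]`, `[L r, [L p, L q]] = 0` and
`[[L p, L q],[L r, L s]] = 0`. -/
theorem so8_closure (p q r s : Oct)
    (hp : conj p = -p) (hq : conj q = -q) (hr : conj r = -r) (hs : conj s = -s)
    (hpu : p * conj p = 1) (hqu : q * conj q = 1) (hru : r * conj r = 1)
    (hsu : s * conj s = 1)
    (hpq : inner p q = 0) (hpr : inner p r = 0) (hps : inner p s = 0)
    (hqr : inner q r = 0) (hqs : inner q s = 0) (hrs : inner r s = 0) :
    cOm (L p) (L q) = (2 : ℝ) • (L p ∘ L q) ∧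
    cOm (L p) (cOm (L p) (L q)) = (-4 : ℝ) • L q ∧
    cOm (cOm (L r) (L p)) (cOm (L p) (L q)) = (-4 : ℝ) • cOm (L r) (L q) ∧
    cOm (L r) (cOm (L p) (L q)) = 0 ∧
    cOm (cOm (L p) (L q)) (cOm (L r) (L s)) = 0 :=
  so8_closure_general p q r s hp hq hr hs hpu hpq hpr hps hqr hqs
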